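/- Riesz composition formula: let d ≥ 1 and let a, b > 0 satisfy a + b < d. Then there exists a constant c = c(a,b,d) > 0 such that for all x, y ∈ ℝ^d, ∫_{ℝ^d} |x - z|^(a-d) |z - y|^(b-d) dz = c |x - y|^(a+b-d). -/

import Mathlib

/-!
With `p = a - d` and `q = b - d`, translating by `y` turns the integral into
`I w = normRpowConv volume p q w = ∫ ‖w - z‖ ^ p * ‖z‖ ^ q dz` at `w = x - y`.
The substitution `z ↦ t • z` gives `I (t • w) = t ^ (p + q + d) * I w`, and a reflection
exchanging two vectors of the same norm shows that `I w` only depends on `‖w‖`; hence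
`I w = I e * ‖w‖ ^ (a + b - d)` for a unit vector `e`.
The constant `I e` is finite since the integrand is integrable near `0` and near `e` (exponents
`> -d`) and at infinity (total exponent `p + q < -d`), and positive since the integrand is.
At `x = y` both sides vanish: the integrand `‖x - z‖ ^ (p + q)` is not integrable, so its Bochner
integral is `0`, and so is `0 ^ (a + b - d)`.
-/

open MeasureTheory Real Set Metric Module

noncomputable def normRpowConv {E : Type*} [NormedAddCommGroup E] [MeasurableSpace E]
    (μ : Measure E) (p q : ℝ) (w : E) : ℝ :=
  ∫ z, ‖w - z‖ ^ p * ‖z‖ ^ q ∂μ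

theorem integral_norm_sub_rpow_mul_norm_sub_rpow {E : Type*} [NormedAddCommGroup E]
    [MeasurableSpace E] [MeasurableAdd E] (μ : Measure E) [μ.IsAddRightInvariant] (p q : ℝ)
    (x y : E) :
    ∫ z, ‖x - z‖ ^ p * ‖z - y‖ ^ q ∂μ = normRpowConv μ p q (x - y) := by
  rw [normRpowConv, ← integral_add_right_eq_self _ y]
  simp only [add_sub_cancel_right, sub_add_eq_sub_sub_swap]

section AddHaar

variable {E : Type*} [NormedAddCommGroup E] [NormedSpace ℝ E] [FiniteDimensional ℝ E]
  [MeasurableSpace E] [BorelSpace E] (μ : Measure E) [μ.IsAddHaarMeasure]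

theorem integrableOn_ball_norm_rpow_iff [Nontrivial E] {r R : ℝ} (hR : 0 < R) :
    IntegrableOn (fun x : E ↦ ‖x‖ ^ r) (ball 0 R) μ ↔ -(finrank ℝ E : ℝ) < r := by
  have hn : ((finrank ℝ E - 1 : ℕ) : ℝ) = finrank ℝ E - 1 := by
    rw [Nat.cast_sub finrank_pos, Nat.cast_one]
  rw [integrableOn_fun_norm_addHaar μ (f := fun y ↦ y ^ r),
    integrableOn_congr_fun (g := fun y ↦ y ^ ((finrank ℝ E - 1 : ℕ) + r)) ?_ measurableSet_Ioo,
    intervalIntegral.integrableOn_Ioo_rpow_iff hR, hn]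
  · constructor <;> intro h <;> linarith
  · intro y hy
    dsimp only
    rw [smul_eq_mul, rpow_add hy.1, rpow_natCast]

theorem not_integrable_norm_rpow [Nontrivial E] {r : ℝ} (hr : r ≤ -(finrank ℝ E : ℝ)) :
    ¬Integrable (fun x : E ↦ ‖x‖ ^ r) μ := fun h ↦
  hr.not_gt ((integrableOn_ball_norm_rpow_iff μ one_pos).1 h.integrableOn)

theorem integrableOn_compl_ball_norm_rpow {r R : ℝ} (hr : r < -(finrank ℝ E : ℝ)) (hR : 0 < R) :
    IntegrableOn (fun x : E ↦ ‖x‖ ^ r) (ball 0 R)ᶜ μ := by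
  have hr0 : r < 0 := hr.trans_le (by simp)
  have hint : Integrable (fun x : E ↦ (R / (1 + R)) ^ r * (1 + ‖x‖) ^ (-(-r))) μ :=
    (integrable_one_add_norm (by linarith)).const_mul _
  have hmeas : Measurable fun x : E ↦ ‖x‖ ^ r := by fun_prop
  refine hint.integrableOn.mono' hmeas.aestronglyMeasurable
    (ae_restrict_of_forall_mem measurableSet_ball.compl fun x hx ↦ ?_)
  have hRx : R ≤ ‖x‖ := by simpa using hx
  -- on the complement of the ball, `‖x‖` is comparable to `1 + ‖x‖`
  have hle : R / (1 + R) * (1 + ‖x‖) ≤ ‖x‖ := by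
    rw [div_mul_eq_mul_div, div_le_iff₀ (by positivity)]
    nlinarith
  rw [norm_of_nonneg (by positivity), neg_neg, ← mul_rpow (by positivity) (by positivity)]
  exact rpow_le_rpow_of_nonpos (by positivity) hle hr0.le

variable {p q : ℝ}

theorem integrableOn_norm_sub_rpow_mul_norm_rpow_of_norm_le {v : E} (hv : v ≠ 0)
    (hq : -(finrank ℝ E : ℝ) < q) (hpq : p + q < -(finrank ℝ E : ℝ)) :
    IntegrableOn (fun z ↦ ‖v - z‖ ^ p * ‖z‖ ^ q) {z | ‖z‖ ≤ ‖v - z‖} μ := by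
  have : Nontrivial E := ⟨⟨v, 0, hv⟩⟩
  have hp : p < 0 := by linarith
  set S := {z : E | ‖z‖ ≤ ‖v - z‖}
  set δ := ‖v‖ / 2 with hδdef
  have hδ : 0 < δ := half_pos (norm_pos_iff.2 hv)
  have hS : MeasurableSet S := measurableSet_le (by fun_prop) (by fun_prop)
  have hmeas : Measurable fun z ↦ ‖v - z‖ ^ p * ‖z‖ ^ q := by fun_prop
  -- on `S`, `‖v - z‖ ≥ max δ ‖z‖`: bound the integrand by `δ ^ p * ‖z‖ ^ q` near `0`
  -- and by `‖z‖ ^ (p + q)` away from `0`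
  have hδS : ∀ z ∈ S, δ ≤ ‖v - z‖ := fun z (hz : ‖z‖ ≤ ‖v - z‖) ↦ by
    linarith [norm_le_norm_add_norm_sub' v z]
  rw [← inter_union_compl S (ball 0 δ)]
  refine IntegrableOn.union ?_ ?_
  · have hball : IntegrableOn (fun z : E ↦ δ ^ p * ‖z‖ ^ q) (ball 0 δ) μ :=
      ((integrableOn_ball_norm_rpow_iff μ hδ).2 hq).const_mul _
    refine (hball.mono_set inter_subset_right).mono' hmeas.aestronglyMeasurable
      (ae_restrict_of_forall_mem (hS.inter measurableSet_ball) ?_)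
    rintro z ⟨hzS, -⟩
    rw [norm_of_nonneg (by positivity)]
    exact mul_le_mul_of_nonneg_right (rpow_le_rpow_of_nonpos hδ (hδS z hzS) hp.le) (by positivity)
  · refine ((integrableOn_compl_ball_norm_rpow μ hpq hδ).mono_set inter_subset_right).mono'
      hmeas.aestronglyMeasurable (ae_restrict_of_forall_mem (hS.inter measurableSet_ball.compl) ?_)
    rintro z ⟨hzS, hz⟩
    have hz0 : 0 < ‖z‖ := hδ.trans_le (by simpa using hz)
    rw [norm_of_nonneg (by positivity), rpow_add hz0]
    exact mul_le_mul_of_nonneg_right (rpow_le_rpow_of_nonpos hz0 hzS hp.le) (by positivity)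

theorem integrable_norm_sub_rpow_mul_norm_rpow {v : E} (hv : v ≠ 0)
    (hp : -(finrank ℝ E : ℝ) < p) (hq : -(finrank ℝ E : ℝ) < q)
    (hpq : p + q < -(finrank ℝ E : ℝ)) :
    Integrable (fun z ↦ ‖v - z‖ ^ p * ‖z‖ ^ q) μ := by
  have hnear0 := integrableOn_norm_sub_rpow_mul_norm_rpow_of_norm_le μ hv hq hpq
  -- `z ↦ v - z` exchanges the roles of `0` and `v`
  have hnearv : IntegrableOn (fun z ↦ ‖v - z‖ ^ p * ‖z‖ ^ q) {z | ‖v - z‖ ≤ ‖z‖} μ := by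
    rw [← (Measure.measurePreserving_sub_left μ v).integrableOn_comp_preimage
      (Homeomorph.subLeft v).measurableEmbedding]
    simpa [Function.comp_def, mul_comm] using
      integrableOn_norm_sub_rpow_mul_norm_rpow_of_norm_le μ hv hp (by linarith : q + p < _)
  exact integrableOn_univ.1 ((hnear0.union hnearv).mono_set fun z _ ↦ le_total ‖z‖ ‖v - z‖)

variable (p q)

theorem normRpowConv_smul {t : ℝ} (ht : 0 < t) (w : E) :
    normRpowConv μ p q (t • w) = t ^ (p + q + finrank ℝ E) * normRpowConv μ p q w := by
  have hscale : ∀ z : E, ‖t • w - t • z‖ ^ p * ‖t • z‖ ^ q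
      = t ^ (p + q) * (‖w - z‖ ^ p * ‖z‖ ^ q) := fun z ↦ by
    rw [← smul_sub, norm_smul, norm_smul, norm_of_nonneg ht.le, mul_rpow ht.le (norm_nonneg _),
      mul_rpow ht.le (norm_nonneg _), rpow_add ht]
    ring
  have h := Measure.integral_comp_smul_of_nonneg μ (fun z ↦ ‖t • w - z‖ ^ p * ‖z‖ ^ q) t
    (hR := ht.le)
  simp only [hscale, integral_const_mul, smul_eq_mul] at h
  rw [eq_inv_mul_iff_mul_eq₀ (by positivity)] at h
  rw [normRpowConv, normRpowConv, ← h, rpow_add ht (p + q), rpow_natCast]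
  ring

theorem normRpowConv_zero [Nontrivial E] (hpq : p + q ≤ -(finrank ℝ E : ℝ)) :
    normRpowConv μ p q 0 = 0 := by
  have hpq0 : p + q ≠ 0 := (hpq.trans_lt (by simpa using finrank_pos)).ne
  refine integral_undef fun h ↦ not_integrable_norm_rpow μ hpq ?_
  simpa [← rpow_add' (norm_nonneg _) hpq0] using h

variable {p q}

theorem normRpowConv_pos {v : E} (hv : v ≠ 0) (hp : -(finrank ℝ E : ℝ) < p)
    (hq : -(finrank ℝ E : ℝ) < q) (hpq : p + q < -(finrank ℝ E : ℝ)) :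
    0 < normRpowConv μ p q v := by
  have : Nontrivial E := ⟨⟨v, 0, hv⟩⟩
  have hint := integrable_norm_sub_rpow_mul_norm_rpow μ hv hp hq hpq
  rw [normRpowConv, integral_pos_iff_support_of_nonneg (fun z ↦ by positivity) hint]
  have hsupp : ({0, v} : Set E)ᶜ ⊆ Function.support fun z ↦ ‖v - z‖ ^ p * ‖z‖ ^ q := by
    intro z hz
    simp only [mem_compl_iff, mem_insert_iff, mem_singleton_iff, not_or] at hz
    exact (mul_pos (rpow_pos_of_pos (norm_pos_iff.2 (sub_ne_zero.2 (Ne.symm hz.2))) _)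
      (rpow_pos_of_pos (norm_pos_iff.2 hz.1) _)).ne'
  have : Infinite E := Module.Free.infinite ℝ E
  exact (IsOpen.measure_pos μ (toFinite _).isClosed.isOpen_compl
    (toFinite _).infinite_compl.nonempty).trans_le (measure_mono hsupp)

end AddHaar

section InnerProductSpace

variable {F : Type*} [NormedAddCommGroup F] [InnerProductSpace ℝ F] [FiniteDimensional ℝ F]
  [MeasurableSpace F] [BorelSpace F] {p q : ℝ}

theorem normRpowConv_eq_of_norm_eq {v w : F} (h : ‖v‖ = ‖w‖) :
    normRpowConv volume p q v = normRpowConv volume p q w := by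
  set e := Submodule.reflection (ℝ ∙ (v - w))ᗮ
  rw [normRpowConv, normRpowConv, ← integral_comp e fun z ↦ ‖w - z‖ ^ p * ‖z‖ ^ q]
  congr 1 with z
  rw [← Submodule.reflection_sub h, ← map_sub, LinearIsometryEquiv.norm_map,
    LinearIsometryEquiv.norm_map]

theorem normRpowConv_eq_mul_norm_rpow {e : F} (he : ‖e‖ = 1)
    (hpq : p + q < -(finrank ℝ F : ℝ)) (w : F) :
    normRpowConv volume p q w = normRpowConv volume p q e * ‖w‖ ^ (p + q + finrank ℝ F) := by
  have : Nontrivial F := ⟨⟨e, 0, by rintro rfl; simp at he⟩⟩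
  rcases eq_or_ne w 0 with rfl | hw
  · rw [normRpowConv_zero volume p q hpq.le, norm_zero, zero_rpow (by linarith), mul_zero]
  have hw' : 0 < ‖w‖ := norm_pos_iff.2 hw
  calc normRpowConv volume p q w = normRpowConv volume p q (‖w‖ • ‖w‖⁻¹ • w) := by
        rw [smul_inv_smul₀ hw'.ne']
    _ = ‖w‖ ^ (p + q + finrank ℝ F) * normRpowConv volume p q (‖w‖⁻¹ • w) :=
        normRpowConv_smul volume p q hw' _
    _ = normRpowConv volume p q e * ‖w‖ ^ (p + q + finrank ℝ F) := by
        rw [normRpowConv_eq_of_norm_eq (w := e) (by rw [norm_smul, norm_inv, norm_norm,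
          inv_mul_cancel₀ hw'.ne', he]), mul_comm]

theorem exists_integral_norm_sub_rpow_mul_norm_sub_rpow_eq (hp : -(finrank ℝ F : ℝ) < p)
    (hq : -(finrank ℝ F : ℝ) < q) (hpq : p + q < -(finrank ℝ F : ℝ)) :
    ∃ c > 0, ∀ x y : F,
      ∫ z, ‖x - z‖ ^ p * ‖z - y‖ ^ q = c * ‖x - y‖ ^ (p + q + finrank ℝ F) := by
  have : Nontrivial F :=
    finrank_pos_iff.1 (by exact_mod_cast (by linarith : (0 : ℝ) < finrank ℝ F))
  obtain ⟨e, he⟩ := exists_norm_eq F zero_le_one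
  refine ⟨normRpowConv volume p q e,
    normRpowConv_pos volume (norm_ne_zero_iff.1 (he ▸ one_ne_zero)) hp hq hpq, fun x y ↦ ?_⟩
  rw [integral_norm_sub_rpow_mul_norm_sub_rpow, normRpowConv_eq_mul_norm_rpow he hpq]

end InnerProductSpace

theorem stmt_11_general (d : ℕ) (a b : ℝ) (ha : 0 < a) (hb : 0 < b)
    (hab : a + b < d) :
    ∃ c > (0 : ℝ), ∀ x y : EuclideanSpace ℝ (Fin d),
      ∫ z : EuclideanSpace ℝ (Fin d),
          ‖x - z‖ ^ (a - d) * ‖z - y‖ ^ (b - d)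
        = c * ‖x - y‖ ^ (a + b - d) := by
  have hdim : (finrank ℝ (EuclideanSpace ℝ (Fin d)) : ℝ) = d := by rw [finrank_euclideanSpace_fin]
  obtain ⟨c, hc, h⟩ := exists_integral_norm_sub_rpow_mul_norm_sub_rpow_eq
    (F := EuclideanSpace ℝ (Fin d)) (p := a - d) (q := b - d)
    (by rw [hdim]; linarith) (by rw [hdim]; linarith) (by rw [hdim]; linarith)
  refine ⟨c, hc, fun x y ↦ ?_⟩
  rw [h, hdim]
  ring_nf

theorem stmt_11 (d : ℕ) (hd : 1 ≤ d) (a b : ℝ) (ha : 0 < a) (hb : 0 < b)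
    (hab : a + b < d) :
    ∃ c > (0 : ℝ), ∀ x y : EuclideanSpace ℝ (Fin d),
      ∫ z : EuclideanSpace ℝ (Fin d),
          ‖x - z‖ ^ (a - d) * ‖z - y‖ ^ (b - d)
        = c * ‖x - y‖ ^ (a + b - d) :=
  stmt_11_general d a b ha hb hab
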